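/- Let R be a preference profile over a finite candidate set C that is single-peaked with respect to a societal axis >, and let D be a clone set for R with |D| ≥ 2 that is of the first type with respect to > (the members of D appear contiguously in >) and satisfies D ∩ peak(R) = ∅. Then the family {X ∈ 𝒞(R) : X ⊆ D} is a string of sausages over D; specifically, it equals the family of all nonempty intervals of D with respect to the restriction of > to D. -/

import Mathlib

variable {α : Type*}

/-- `r` is a strict linear order (complete, transitive, antisymmetric) on the set `C`. -/
def IsLinOn (C : Set α) (r : α → α → Prop) : Prop :=
  (∀ a ∈ C, ¬r a a) ∧
    (∀ a ∈ C, ∀ b ∈ C, ∀ c ∈ C, r a b → r b c → r a c) ∧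
      ∀ a ∈ C, ∀ b ∈ C, a ≠ b → r a b ∨ r b a

/-- A preference profile over `C`: a (nonempty) finite tuple of linear orders on `C`. -/
def IsProfile (C : Set α) {n : ℕ} (R : Fin n → α → α → Prop) : Prop :=
  0 < n ∧ ∀ i, IsLinOn C (R i)

/-- `X` is a clone set for the profile `R` over `C`. -/
def IsCloneSet (C : Set α) {n : ℕ} (R : Fin n → α → α → Prop) (X : Set α) : Prop :=
  X.Nonempty ∧ X ⊆ C ∧
    ∀ c ∈ X, ∀ c' ∈ X, ∀ a ∈ C \ X, ∀ i, (R i c a ↔ R i c' a)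

/-- The clone structure of `R`: the family of all clone sets. -/
def cloneSets (C : Set α) {n : ℕ} (R : Fin n → α → α → Prop) : Set (Set α) :=
  {X | IsCloneSet C R X}

/-- `X` and `Y` intersect non-trivially. -/
def Bowtie (X Y : Set α) : Prop :=
  (X ∩ Y).Nonempty ∧ (X \ Y).Nonempty ∧ (Y \ X).Nonempty

/-- `r` is compatible with the societal axis `ax` on `C`. -/
def AxisCompatible (C : Set α) (ax r : α → α → Prop) : Prop :=
  ∀ c ∈ C, ∀ d ∈ C, ∀ e ∈ C, ((ax c d ∧ ax d e) ∨ (ax e d ∧ ax d c)) → r c d → r d e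

/-- The profile `R` is single-peaked with respect to the societal axis `ax`. -/
def SinglePeakedWrt (C : Set α) {n : ℕ} (R : Fin n → α → α → Prop)
    (ax : α → α → Prop) : Prop :=
  IsLinOn C ax ∧ ∀ i, AxisCompatible C ax (R i)

/-- The profile `R` is single-peaked. -/
def SinglePeaked (C : Set α) {n : ℕ} (R : Fin n → α → α → Prop) : Prop :=
  ∃ ax, SinglePeakedWrt C R ax

/-- `p` is the top-ranked candidate of the order `r` on `C`. -/
def IsPeakOf (C : Set α) (r : α → α → Prop) (p : α) : Prop :=
  p ∈ C ∧ ∀ a ∈ C, a ≠ p → r p a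

/-- The set of peaks of the profile `R`. -/
def peakSet (C : Set α) {n : ℕ} (R : Fin n → α → α → Prop) : Set α :=
  {p | ∃ i, IsPeakOf C (R i) p}

/-- `D` appears contiguously in the axis `gt` (a clone set of the first type). -/
def ContiguousIn (C : Set α) (gt : α → α → Prop) (D : Set α) : Prop :=
  ¬∃ a ∈ C \ D, ∃ d ∈ D, ∃ d' ∈ D, gt d a ∧ gt a d'

/-- `𝓕` is a string of sausages over `F`: the family of all intervals of some
enumeration of `F`. -/
def IsStringOfSausages (F : Set α) (𝓕 : Set (Set α)) : Prop :=
  ∃ (m : ℕ) (f : Fin m → α), Function.Injective f ∧ Set.range f = F ∧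
    𝓕 = {S | ∃ i j : Fin m, i ≤ j ∧ S = f '' Set.Icc i j}

/-- `𝓕` is a fat sausage over `F`: the whole set together with all singletons. -/
def IsFatSausage (F : Set α) (𝓕 : Set (Set α)) : Prop :=
  𝓕 = ({F} : Set (Set α)) ∪ {S | ∃ x ∈ F, S = ({x} : Set α)}

/-!
A voter whose peak lies outside the contiguous block `D` sees all of `D` on one side of the peak,
so by single-peakedness her ranking restricted to `D` is the axis order or its reverse. For such
a profile, the clone sets inside the clone set `D` are exactly the nonempty axis-intervals of `D`,
and listing `D` along the axis identifies these with the intervals `Icc i j` of `Fin m`.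
-/
namespace IsLinOn

variable {C D : Set α} {r s : α → α → Prop}

lemma mono (h : IsLinOn C r) (hDC : D ⊆ C) : IsLinOn D r :=
  ⟨fun a ha => h.1 a (hDC ha), fun a ha b hb c hc => h.2.1 a (hDC ha) b (hDC hb) c (hDC hc),
    fun a ha b hb => h.2.2 a (hDC ha) b (hDC hb)⟩

lemma flip (h : IsLinOn C r) : IsLinOn C (flip r) :=
  ⟨h.1, fun a ha b hb c hc hab hbc => h.2.1 c hc b hb a ha hbc hab,
    fun a ha b hb hab => (h.2.2 a ha b hb hab).symm⟩

lemma asymm (h : IsLinOn C r) {a b : α} (ha : a ∈ C) (hb : b ∈ C) (hab : r a b) : ¬r b a :=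
  fun hba => h.1 a ha (h.2.1 a ha b hb a ha hab hba)

lemma rel_iff_not_rel (h : IsLinOn C r) {a b : α} (ha : a ∈ C) (hb : b ∈ C) (hab : a ≠ b) :
    r a b ↔ ¬r b a :=
  ⟨h.asymm ha hb, (h.2.2 a ha b hb hab).resolve_right⟩

lemma rel_iff_of_imp (hr : IsLinOn C r) (hs : IsLinOn C s)
    (hsr : ∀ a ∈ C, ∀ b ∈ C, s a b → r a b) {a b : α} (ha : a ∈ C) (hb : b ∈ C) :
    r a b ↔ s a b := by
  refine ⟨fun hab => ?_, hsr a ha b hb⟩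
  rcases eq_or_ne a b with rfl | hne
  · exact absurd hab (hr.1 a ha)
  · exact (hs.2.2 a ha b hb hne).resolve_right fun hba => hr.asymm ha hb hab (hsr b hb a ha hba)

lemma exists_fin_enum (h : IsLinOn C r) (hC : C.Finite) :
    ∃ m, ∃ f : Fin m → α, Function.Injective f ∧ Set.range f = C ∧
      ∀ i j, r (f i) (f j) ↔ i < j := by
  classical
  have : IsStrictTotalOrder C (fun a b => r a b) :=
    { irrefl := fun a => h.1 a a.2
      trans := fun a b c => h.2.1 a a.2 b b.2 c c.2
      trichotomous := fun a b hab hba => by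
        by_contra hne
        exact (h.2.2 a a.2 b b.2 (Subtype.coe_ne_coe.2 hne)).elim hab hba }
  let := linearOrderOfSTO (fun a b : C => r a b)
  have := hC.fintype
  let e := Fintype.orderIsoFinOfCardEq C rfl
  exact ⟨_, fun i => e i, Subtype.val_injective.comp e.injective,
    (e.surjective.range_comp _).trans Subtype.range_coe, fun i j => e.lt_iff_lt⟩

lemma exists_isPeakOf (h : IsLinOn C r) (hC : C.Finite) (hne : C.Nonempty) :
    ∃ p, IsPeakOf C r p := by
  obtain ⟨m, f, -, rfl, hf⟩ := h.exists_fin_enum hC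
  obtain ⟨-, k, -⟩ := hne
  have : NeZero m := NeZero.of_pos k.pos
  refine ⟨f 0, Set.mem_range_self 0, ?_⟩
  rintro _ ⟨j, rfl⟩ hj
  exact (hf 0 j).2 (Fin.pos_iff_ne_zero.2 fun h => hj (h ▸ rfl))

end IsLinOn

section Contiguity

variable {C D : Set α} {r : α → α → Prop}

lemma contiguousIn_iff :
    ContiguousIn C r D ↔ ∀ x ∈ D, ∀ y ∈ D, ∀ a ∈ C, r x a → r a y → a ∈ D := by
  simp only [ContiguousIn, Set.mem_sdiff]
  grind

lemma contiguousIn_iff_forall_rel_iff (hr : IsLinOn C r) (hDC : D ⊆ C) :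
    ContiguousIn C r D ↔ ∀ c ∈ D, ∀ c' ∈ D, ∀ a ∈ C \ D, (r c a ↔ r c' a) := by
  constructor
  · intro hD c hc c' hc' a ha
    have key : ∀ x ∈ D, ∀ y ∈ D, r x a → r y a := fun x hx y hy hxa => by
      by_contra hya
      have hay := (hr.rel_iff_not_rel ha.1 (hDC hy) fun h => ha.2 (h ▸ hy)).2 hya
      exact hD ⟨a, ha, x, hx, y, hy, hxa, hay⟩
    exact ⟨key c hc c' hc', key c' hc' c hc⟩
  · rintro h ⟨a, ha, d, hd, d', hd', hda, had'⟩
    exact hr.asymm ha.1 (hDC hd') had' ((h d hd d' hd' a ha).1 hda)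

lemma contiguousIn_range_image_iff {m : ℕ} {f : Fin m → α} (hinj : Function.Injective f)
    (hf : ∀ i j, r (f i) (f j) ↔ i < j) (T : Set (Fin m)) :
    ContiguousIn (Set.range f) r (f '' T) ↔ T.OrdConnected := by
  constructor
  · intro h
    refine Set.ordConnected_of_Ioo fun i hi j hj _ k hk => by_contra fun hkT => h ?_
    exact ⟨f k, ⟨Set.mem_range_self k, fun hfk => hkT (hinj.mem_set_image.1 hfk)⟩,
      f i, Set.mem_image_of_mem f hi, f j, Set.mem_image_of_mem f hj,
      (hf i k).2 hk.1, (hf k j).2 hk.2⟩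
  · rintro hT ⟨_, ⟨⟨k, rfl⟩, hkT⟩, _, ⟨i, hi, rfl⟩, _, ⟨j, hj, rfl⟩, hik, hkj⟩
    exact hkT (Set.mem_image_of_mem f (hT.out hi hj ⟨((hf i k).1 hik).le, ((hf k j).1 hkj).le⟩))

lemma setOf_contiguousIn_range_eq_image_Icc {m : ℕ} {f : Fin m → α} (hinj : Function.Injective f)
    (hf : ∀ i j, r (f i) (f j) ↔ i < j) :
    {S | S.Nonempty ∧ S ⊆ Set.range f ∧ ContiguousIn (Set.range f) r S} =
      {S | ∃ i j, i ≤ j ∧ S = f '' Set.Icc i j} := by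
  ext S
  constructor
  · rintro ⟨hSne, hSf, hS⟩
    obtain ⟨T, rfl⟩ : ∃ T, S = f '' T := ⟨f ⁻¹' S, (Set.image_preimage_eq_of_subset hSf).symm⟩
    obtain ⟨k, hk⟩ := Set.image_nonempty.1 hSne
    have : NeZero m := NeZero.of_pos k.pos
    have hT : T = Set.Icc (sInf T) (sSup T) := (Set.Nonempty.ordConnected_iff_of_bdd' ⟨k, hk⟩).1
      ((contiguousIn_range_image_iff hinj hf T).1 hS)
    exact ⟨sInf T, sSup T, Set.nonempty_Icc.1 (hT ▸ ⟨k, hk⟩), congrArg (f '' ·) hT⟩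
  · rintro ⟨i, j, hij, rfl⟩
    exact ⟨(Set.nonempty_Icc.2 hij).image f, Set.image_subset_range _ _,
      (contiguousIn_range_image_iff hinj hf _).2 Set.ordConnected_Icc⟩

end Contiguity

lemma AxisCompatible.rel_iff_or_rel_iff_flip {C D : Set α} {ax r : α → α → Prop} {p : α}
    (hax : IsLinOn C ax) (hr : IsLinOn C r) (hcomp : AxisCompatible C ax r)
    (hp : IsPeakOf C r p) (hDC : D ⊆ C) (hD : ContiguousIn C ax D) (hpD : p ∉ D) :
    (∀ c ∈ D, ∀ d ∈ D, r c d ↔ ax c d) ∨ (∀ c ∈ D, ∀ d ∈ D, r c d ↔ ax d c) := by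
  have hpC : p ∈ C \ D := ⟨hp.1, hpD⟩
  have hne : ∀ c ∈ D, c ≠ p := fun c hc h => hpD (h ▸ hc)
  have hside := (contiguousIn_iff_forall_rel_iff hax hDC).1 hD
  by_cases hbelow : ∃ d₀ ∈ D, ax d₀ p
  · obtain ⟨d₀, hd₀, hd₀p⟩ := hbelow
    refine Or.inr fun c hc d hd =>
      (hr.mono hDC).rel_iff_of_imp (hax.mono hDC).flip (fun c hc d hd hdc => ?_) hc hd
    have hcp : ax c p := (hside d₀ hd₀ c hc p hpC).1 hd₀p
    exact hcomp p hp.1 c (hDC hc) d (hDC hd) (Or.inr ⟨hdc, hcp⟩) (hp.2 c (hDC hc) (hne c hc))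
  · push Not at hbelow
    refine Or.inl fun c hc d hd =>
      (hr.mono hDC).rel_iff_of_imp (hax.mono hDC) (fun c hc d hd hcd => ?_) hc hd
    have hpc : ax p c := (hax.rel_iff_not_rel hp.1 (hDC hc) (hne c hc).symm).2 (hbelow c hc)
    exact hcomp p hp.1 c (hDC hc) d (hDC hd) (Or.inl ⟨hpc, hcd⟩) (hp.2 c (hDC hc) (hne c hc))

section Clones

variable {C D X : Set α} {n : ℕ} {R : Fin n → α → α → Prop}

lemma IsCloneSet.isCloneSet_iff_of_subset (hD : IsCloneSet C R D) (hXD : X ⊆ D) :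
    IsCloneSet C R X ↔ IsCloneSet D R X := by
  refine and_congr_right fun _ => ⟨fun ⟨_, h⟩ => ⟨hXD, fun c hc c' hc' a ha =>
    h c hc c' hc' a ⟨hD.2.1 ha.1, ha.2⟩⟩, fun ⟨_, h⟩ => ⟨hXD.trans hD.2.1, ?_⟩⟩
  intro c hc c' hc' a ha
  by_cases haD : a ∈ D
  · exact h c hc c' hc' a ⟨haD, ha.2⟩
  · exact hD.2.2 c (hXD hc) c' (hXD hc') a ⟨ha.1, haD⟩

lemma isCloneSet_iff_contiguousIn {ax : α → α → Prop} (hn : 0 < n) (hax : IsLinOn D ax)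
    (hR : ∀ i, (∀ c ∈ D, ∀ d ∈ D, R i c d ↔ ax c d) ∨ (∀ c ∈ D, ∀ d ∈ D, R i c d ↔ ax d c))
    (hXD : X ⊆ D) :
    IsCloneSet D R X ↔ X.Nonempty ∧ ContiguousIn D ax X := by
  have hvoter : ∀ c ∈ X, ∀ c' ∈ X, ∀ a ∈ D \ X, ∀ i,
      (R i c a ↔ R i c' a) ↔ (ax c a ↔ ax c' a) := by
    intro c hc c' hc' a ha i
    have hac : a ≠ c := fun h => ha.2 (h ▸ hc)
    have hac' : a ≠ c' := fun h => ha.2 (h ▸ hc')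
    rcases hR i with h | h
    · rw [h c (hXD hc) a ha.1, h c' (hXD hc') a ha.1]
    · rw [h c (hXD hc) a ha.1, h c' (hXD hc') a ha.1, hax.rel_iff_not_rel ha.1 (hXD hc) hac,
        hax.rel_iff_not_rel ha.1 (hXD hc') hac', not_iff_not]
  rw [contiguousIn_iff_forall_rel_iff hax hXD, IsCloneSet, and_congr_right_iff]
  refine fun _ => ⟨fun ⟨_, h⟩ c hc c' hc' a ha => (hvoter c hc c' hc' a ha ⟨0, hn⟩).1
    (h c hc c' hc' a ha ⟨0, hn⟩), fun h => ⟨hXD, fun c hc c' hc' a ha i =>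
      (hvoter c hc c' hc' a ha i).2 (h c hc c' hc' a ha)⟩⟩

end Clones

theorem first_type_clone_string_of_sausages_general (C : Set α) (hC : C.Finite) {n : ℕ}
    (R : Fin n → α → α → Prop) (hR : IsProfile C R)
    (gt : α → α → Prop) (hsp : SinglePeakedWrt C R gt)
    (D : Set α) (hD : IsCloneSet C R D)
    (hfirst : ContiguousIn C gt D) (hpk : D ∩ peakSet C R = ∅) :
    IsStringOfSausages D {X ∈ cloneSets C R | X ⊆ D} ∧
      {X ∈ cloneSets C R | X ⊆ D} =
        {S | S.Nonempty ∧ S ⊆ D ∧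
          ∀ x ∈ S, ∀ y ∈ S, ∀ d ∈ D, gt x d → gt d y → d ∈ S} := by
  have hDC : D ⊆ C := hD.2.1
  have hagree : ∀ i, (∀ c ∈ D, ∀ d ∈ D, R i c d ↔ gt c d) ∨
      (∀ c ∈ D, ∀ d ∈ D, R i c d ↔ gt d c) := fun i => by
    obtain ⟨p, hp⟩ := (hR.2 i).exists_isPeakOf hC (hD.1.mono hDC)
    exact (hsp.2 i).rel_iff_or_rel_iff_flip hsp.1 (hR.2 i) hp hDC hfirst
      fun hpD => (Set.eq_empty_iff_forall_notMem.1 hpk) p ⟨hpD, i, hp⟩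
  have hclones : {X ∈ cloneSets C R | X ⊆ D} =
      {S | S.Nonempty ∧ S ⊆ D ∧ ContiguousIn D gt S} := by
    ext X
    by_cases hXD : X ⊆ D
    · simp [cloneSets, hXD, hD.isCloneSet_iff_of_subset hXD,
        isCloneSet_iff_contiguousIn hR.1 (hsp.1.mono hDC) hagree hXD]
    · simp [hXD]
  obtain ⟨m, f, hinj, rfl, hf⟩ := (hsp.1.mono hDC).exists_fin_enum (hC.subset hDC)
  refine ⟨⟨m, f, hinj, rfl, hclones.trans (setOf_contiguousIn_range_eq_image_Icc hinj hf)⟩, ?_⟩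
  simp only [hclones, contiguousIn_iff]

theorem first_type_clone_string_of_sausages (C : Set α) (hC : C.Finite) {n : ℕ}
    (R : Fin n → α → α → Prop) (hR : IsProfile C R)
    (gt : α → α → Prop) (hsp : SinglePeakedWrt C R gt)
    (D : Set α) (hD : IsCloneSet C R D) (hcard : 2 ≤ D.ncard)
    (hfirst : ContiguousIn C gt D) (hpk : D ∩ peakSet C R = ∅) :
    IsStringOfSausages D {X ∈ cloneSets C R | X ⊆ D} ∧
      {X ∈ cloneSets C R | X ⊆ D} =
        {S | S.Nonempty ∧ S ⊆ D ∧
          ∀ x ∈ S, ∀ y ∈ S, ∀ d ∈ D, gt x d → gt d y → d ∈ S} :=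
  first_type_clone_string_of_sausages_general C hC R hR gt hsp D hD hfirst hpk
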